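/- arXiv:1004.3618 — 8 statements merged into one kernel-verified Lean document; each statement's English description precedes it below -/
import Mathlib

section
/- Let R = k[t, t⁻¹] be the Laurent polynomial ring over a commutative Noetherian ring k, with augmentation ideal ω = (1-t)R, and let S = {1 - r : r ∈ ω}. A finitely generated R-module M is S-torsion-free (i.e., sx ≠ 0 for all s ∈ S and nonzero x ∈ M) if and only if ⋂_{n≥1} ω^n M = 0. -/
/-!
By the Krull intersection theorem, in a finitely generated module over a Noetherian ring an
element `x` lies in `⋂ₙ Iⁿ M` exactly when `r • x = x`, i.e. `(1 - r) • x = 0`, for some `r ∈ I`.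
So `⋂ₙ Iⁿ M = 0` is `(1 - I)`-torsion-freeness, for every ideal `I`; here `k[t, t⁻¹]` is
Noetherian as a localization of `k[t]`.
-/

open LaurentPolynomial

instance LaurentPolynomial.isNoetherianRing (k : Type*) [CommRing k] [IsNoetherianRing k] :
    IsNoetherianRing k[T;T⁻¹] :=
  IsLocalization.isNoetherianRing (Submonoid.powers (Polynomial.X : Polynomial k)) _
    Polynomial.isNoetherianRing

section

variable {R M : Type*} [CommRing R] [AddCommGroup M] [Module R M]

theorem Submodule.iInf_one_le_pow_smul_top (I : Ideal R) :
    (⨅ (n : ℕ) (_ : 1 ≤ n), (I ^ n • ⊤ : Submodule R M)) = ⨅ n : ℕ, I ^ n • ⊤ := by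
  refine le_antisymm (le_iInf fun n => ?_) (le_iInf₂ fun n _ => iInf_le _ n)
  rcases Nat.eq_zero_or_pos n with rfl | hn
  · simp
  · exact iInf₂_le n hn

theorem Ideal.iInf_pow_smul_eq_bot_iff [IsNoetherianRing R] [Module.Finite R M] (I : Ideal R) :
    (⨅ n : ℕ, I ^ n • ⊤ : Submodule R M) = ⊥ ↔ ∀ r ∈ I, ∀ x : M, x ≠ 0 → (1 - r) • x ≠ 0 := by
  simp only [Submodule.eq_bot_iff, Ideal.mem_iInf_smul_pow_eq_bot_iff, Subtype.exists,
    sub_smul, one_smul, ne_eq, sub_eq_zero, exists_prop]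
  constructor
  · intro h r hr x hx hrx
    exact hx (h x ⟨r, hr, hrx.symm⟩)
  · intro h x ⟨r, hr, hrx⟩
    by_contra hx
    exact h r hr x hx hrx.symm

end

theorem torsionfree_iff_inter_eq_bot_general (k : Type*) [CommRing k] [IsNoetherianRing k]
    (M : Type*) [AddCommGroup M] [Module (LaurentPolynomial k) M]
    [Module.Finite (LaurentPolynomial k) M]
    (ω : Ideal (LaurentPolynomial k)) :
    (∀ r ∈ ω, ∀ x : M, x ≠ 0 → (1 - r) • x ≠ 0) ↔
      (⨅ (n : ℕ) (_ : 1 ≤ n), (ω ^ n • ⊤ : Submodule (LaurentPolynomial k) M)) = ⊥ := by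
  rw [Submodule.iInf_one_le_pow_smul_top, Ideal.iInf_pow_smul_eq_bot_iff]

theorem torsionfree_iff_inter_eq_bot (k : Type*) [CommRing k] [IsNoetherianRing k]
    (M : Type*) [AddCommGroup M] [Module (LaurentPolynomial k) M]
    [Module.Finite (LaurentPolynomial k) M]
    (ω : Ideal (LaurentPolynomial k)) (hω : ω = Ideal.span {1 - T 1}) :
    (∀ r ∈ ω, ∀ x : M, x ≠ 0 → (1 - r) • x ≠ 0) ↔
      (⨅ (n : ℕ) (_ : 1 ≤ n), (ω ^ n • ⊤ : Submodule (LaurentPolynomial k) M)) = ⊥ :=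
  torsionfree_iff_inter_eq_bot_general k M ω
end

section
/- Let H be a subnormal subgroup of finite index in a group G, and let K be any subgroup of G. Then the index [K : H ∩ K] divides [G : H]. -/
/-- `H` is a subnormal subgroup of `G`: there is a finite chain of subgroups from `H` to `G`,
each normal in the next. -/
def Subgroup.IsSubnormal' {G : Type*} [Group G] (H : Subgroup G) : Prop :=
  ∃ n : ℕ, ∃ c : ℕ → Subgroup G, c 0 = H ∧ c n = ⊤ ∧
    ∀ i < n, c i ≤ c (i + 1) ∧ ((c i).subgroupOf (c (i + 1))).Normal

/-!
Induct along the subnormal chain `H ≤ N ≤ ⋯ ≤ G`. For one step with `H` normal in `N`,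
`[K : H ∩ K] = [N ∩ K : H ∩ K] · [K : N ∩ K]`; the first factor divides `[N : H]` because `H` is
normal in `N`, and the second divides `[G : N]` by induction. Multiplying gives a divisor of
`[N : H] · [G : N] = [G : H]`.
-/

namespace Subgroup

variable {G : Type*} [Group G]

theorem relIndex_dvd_relIndex_mul_relIndex_of_normal {H N : Subgroup G} (hle : H ≤ N)
    (hN : (H.subgroupOf N).Normal) (K : Subgroup G) :
    H.relIndex K ∣ H.relIndex N * N.relIndex K := by
  have hsplit : H.relIndex (N ⊓ K) * N.relIndex K = H.relIndex K := by
    rw [relIndex_inf_mul_relIndex, inf_of_le_left hle]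
  have hnormal : H.relIndex (N ⊓ K) ∣ H.relIndex N := by
    rw [← relIndex_subgroupOf inf_le_left]
    exact relIndex_dvd_index_of_normal (H.subgroupOf N) ((N ⊓ K).subgroupOf N)
  exact hsplit ▸ mul_dvd_mul_right hnormal _

theorem IsSubnormal.relIndex_dvd_index {H : Subgroup G} (hH : H.IsSubnormal) (K : Subgroup G) :
    H.relIndex K ∣ H.index := by
  induction hH with
  | top => simp
  | step H N hle _ hN ih =>
    calc H.relIndex K ∣ H.relIndex N * N.relIndex K :=
          relIndex_dvd_relIndex_mul_relIndex_of_normal hle hN K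
      _ ∣ H.relIndex N * N.index := mul_dvd_mul_left _ ih
      _ = H.index := relIndex_mul_index hle

theorem IsSubnormal'.isSubnormal {H : Subgroup G} (hH : H.IsSubnormal') : H.IsSubnormal := by
  obtain ⟨n, c, rfl, htop, hchain⟩ := hH
  induction n generalizing c with
  | zero => exact htop ▸ IsSubnormal.top
  | succ n ih =>
    obtain ⟨hle, hN⟩ := hchain 0 n.succ_pos
    exact .step _ _ hle (ih (fun i => c (i + 1)) htop fun i hi => hchain (i + 1) (by omega)) hN

end Subgroup

theorem relindex_dvd_index_of_subnormal_general (G : Type*) [Group G] (H K : Subgroup G)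
    (hsub : H.IsSubnormal') :
    H.relIndex K ∣ H.index :=
  hsub.isSubnormal.relIndex_dvd_index K

theorem relindex_dvd_index_of_subnormal (G : Type*) [Group G] (H K : Subgroup G)
    (hsub : H.IsSubnormal') (hfin : H.FiniteIndex) :
    H.relIndex K ∣ H.index :=
  relindex_dvd_index_of_subnormal_general G H K hsub
end

section
/- If G₁, …, G_m are subnormal subgroups of finite index in a group G, then [G : G₁ ∩ ⋯ ∩ G_m] divides [G : G₁] ⋯ [G : G_m]. -/
namespace Subgroup

variable {G : Type*} [Group G]

theorem relIndex_dvd_relIndex_of_normal_subgroupOf {H K L : Subgroup G} (hKL : K ≤ L)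
    [(H.subgroupOf L).Normal] : H.relIndex K ∣ H.relIndex L := by
  rw [← relIndex_subgroupOf hKL]
  exact relIndex_dvd_index_of_normal (H.subgroupOf L) (K.subgroupOf L)

theorem IsSubnormal.index_inf_dvd {H : Subgroup G} (hH : H.IsSubnormal) (K : Subgroup G) :
    (H ⊓ K).index ∣ H.index * K.index := by
  rw [← relIndex_mul_index (inf_le_right : H ⊓ K ≤ K), inf_relIndex_right]
  exact mul_dvd_mul_right (hH.relIndex_dvd_index K) _

theorem index_biInf_dvd_prod_index {ι : Type*} (s : Finset ι) (f : ι → Subgroup G)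
    (hf : ∀ i ∈ s, (f i).IsSubnormal) : (⨅ i ∈ s, f i).index ∣ ∏ i ∈ s, (f i).index := by
  classical
  induction s using Finset.induction_on with
  | empty => simp
  | insert a s ha ih =>
    rw [Finset.iInf_insert, Finset.prod_insert ha]
    exact ((hf a (s.mem_insert_self a)).index_inf_dvd _).trans <|
      mul_dvd_mul_left _ (ih fun i hi ↦ hf i (Finset.mem_insert_of_mem hi))

end Subgroup

theorem index_inf_dvd_prod_index_general (G : Type*) [Group G] (m : ℕ)
    (Gs : Fin m → Subgroup G) (hsub : ∀ i, (Gs i).IsSubnormal') :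
    (⨅ i, Gs i).index ∣ ∏ i, (Gs i).index := by
  simpa using Subgroup.index_biInf_dvd_prod_index Finset.univ Gs fun i _ ↦ (hsub i).isSubnormal

theorem index_inf_dvd_prod_index (G : Type*) [Group G] (m : ℕ)
    (Gs : Fin m → Subgroup G) (hsub : ∀ i, (Gs i).IsSubnormal')
    (hfin : ∀ i, (Gs i).FiniteIndex) :
    (⨅ i, Gs i).index ∣ ∏ i, (Gs i).index :=
  index_inf_dvd_prod_index_general G m Gs hsub
end

section
/- Let φ be an automorphism of ℤ^d and G = ℤ ⋉_φ ℤ^d. Then G is residually p for every prime p if and only if φ is unipotent. -/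
/-!
If `φ` is unipotent, then over `ZMod (p ^ n)` the binomial expansion of
`(1 + (φ - 1)) ^ p ^ (n + d)` collapses to `1`, so reducing `ℤ^d` modulo `p ^ n` and sending the
generator of `ℤ` to the reduction of `φ` maps `ℤ ⋉_φ ℤ^d` to a finite `p`-group
`(ℤ/p^n)^d ⋊ ⟨φ mod p^n⟩`; these quotients separate the nontrivial elements of `ℤ^d`, and the
quotients `ℤ/p^n` of `ℤ` separate the others.

Conversely, commutation with the generator of `ℤ` acts on `ℤ^d` as `φ - 1`, so the image of
`(φ - 1) ^ c` lies in the `c`-th term of the lower central series. If `(φ - 1) ^ d ≠ 0`, the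
Cayley–Hamilton theorem, with `a` the lowest nonzero coefficient of the characteristic polynomial
of `φ - 1`, gives `v ≠ 0` with `a ^ c • v` in the image of `(φ - 1) ^ c` for every `c`. A
homomorphism to a finite `p`-group with `p ∤ a` is nilpotent, so it kills `a ^ c • v` and hence `v`.
-/

/-- The action of `ℤ` on `ℤ^d` where `1` acts by `φ`. -/
def sdAct (d : ℕ) (φ : (Fin d → ℤ) ≃ₗ[ℤ] (Fin d → ℤ)) :
    Multiplicative ℤ →* MulAut (Multiplicative (Fin d → ℤ)) :=
  zpowersHom _ (AddEquiv.toMultiplicative φ.toAddEquiv)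

/-- The mapping torus `ℤ ⋉_φ ℤ^d`. -/
abbrev MapTorus (d : ℕ) (φ : (Fin d → ℤ) ≃ₗ[ℤ] (Fin d → ℤ)) :=
  Multiplicative (Fin d → ℤ) ⋊[sdAct d φ] Multiplicative ℤ

/-- A group is residually `p` if every nontrivial element is detected by a homomorphism
to a finite `p`-group. -/
def ResiduallyP (p : ℕ) (G : Type*) [Group G] : Prop :=
  ∀ g : G, g ≠ 1 → ∃ (P : Type) (_ : Group P) (_ : Finite P) (f : G →* P),
    IsPGroup p P ∧ f g ≠ 1

open Polynomial
open scoped commutatorElement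

theorem Polynomial.exists_trailingCoeff_pow_smul_pow_eq {R A : Type*} [CommRing R] [Ring A]
    [Algebra R A] {P : R[X]} {x : A} (hP : aeval x P = 0) {d : ℕ}
    (hd : P.natTrailingDegree ≤ d) :
    ∃ t : A, ∀ n, P.trailingCoeff ^ n • x ^ d = x ^ (n + d) * t ^ n := by
  set k := P.natTrailingDegree
  obtain ⟨Q, hQ⟩ : X ^ k ∣ P := X_pow_dvd_iff.2 fun _ h => coeff_eq_zero_of_lt_natTrailingDegree h
  have hQ0 : Q.coeff 0 = P.trailingCoeff := by
    have h := coeff_X_pow_mul Q k 0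
    rw [zero_add, ← hQ] at h
    exact h.symm
  have hQx : x ^ d * aeval x Q = 0 := by
    have hPQ : aeval x P = x ^ k * aeval x Q := by rw [hQ, map_mul, aeval_X_pow]
    rw [← Nat.sub_add_cancel hd, pow_add, mul_assoc, ← hPQ, hP, mul_zero]
  have hstep : P.trailingCoeff • x ^ d = x ^ (d + 1) * -aeval x Q.divX := by
    rw [← X_mul_divX_add Q, hQ0, map_add, aeval_C, map_mul, aeval_X, mul_add,
      ← Algebra.commutes, ← mul_assoc, ← Algebra.smul_def, ← pow_succ] at hQx
    rw [mul_neg, eq_neg_iff_add_eq_zero, add_comm, hQx]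
  refine ⟨-aeval x Q.divX, fun n => ?_⟩
  induction n with
  | zero => simp
  | succ n ih =>
    rw [pow_succ', mul_smul, ih, pow_add x n d, mul_assoc, ← mul_smul_comm, ← smul_mul_assoc,
      hstep, mul_assoc, ← pow_succ', ← mul_assoc, ← pow_add]
    ring_nf

theorem Module.End.exists_smul_pow_mem_range_pow {R M : Type*} [CommRing R] [Nontrivial R]
    [AddCommGroup M] [Module R M] [Module.Free R M] [Module.Finite R M] {f : Module.End R M}
    (hf : f ^ Module.finrank R M ≠ 0) :
    ∃ a : R, a ≠ 0 ∧ ∃ v : M, v ≠ 0 ∧ ∀ n, a ^ n • v ∈ LinearMap.range (f ^ n) := by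
  obtain ⟨t, ht⟩ := Polynomial.exists_trailingCoeff_pow_smul_pow_eq
    (LinearMap.aeval_self_charpoly f)
    (f.charpoly.natTrailingDegree_le_natDegree.trans f.charpoly_natDegree.le)
  obtain ⟨w, hw⟩ : ∃ w, (f ^ Module.finrank R M) w ≠ 0 := by
    by_contra! h
    exact hf (LinearMap.ext h)
  refine ⟨_, trailingCoeff_eq_zero.not.2 f.charpoly_monic.ne_zero, _, hw,
    fun n => ⟨(f ^ Module.finrank R M * t ^ n) w, ?_⟩⟩
  rw [← LinearMap.smul_apply, ht, pow_add, mul_assoc]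
  rfl

theorem Int.exists_prime_not_dvd {a : ℤ} (ha : a ≠ 0) : ∃ p : ℕ, p.Prime ∧ ¬(p : ℤ) ∣ a := by
  obtain ⟨p, hpa, hp⟩ := Nat.exists_infinite_primes (a.natAbs + 1)
  refine ⟨p, hp, fun h => ?_⟩
  have := Nat.le_of_dvd (Int.natAbs_pos.2 ha) (Int.natCast_dvd.1 h)
  omega

theorem Int.exists_cast_zmod_prime_pow_ne_zero {p : ℕ} (hp : p.Prime) {z : ℤ} (hz : z ≠ 0) :
    ∃ n, (z : ZMod (p ^ n)) ≠ 0 := by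
  obtain ⟨n, hn⟩ := Int.finiteMultiplicity_iff (a := p).2 ⟨by simpa using hp.ne_one, hz⟩
  exact ⟨n + 1, fun h => hn (by exact_mod_cast (ZMod.intCast_zmod_eq_zero_iff_dvd _ _).1 h)⟩

theorem Nat.Prime.pow_dvd_choose_pow_add {p : ℕ} (hp : p.Prime) {n d k : ℕ} (hk0 : k ≠ 0)
    (hkd : k ≤ d) : p ^ n ∣ (p ^ (n + d)).choose k := by
  have hkp : k ≤ p ^ (n + d) :=
    (Nat.lt_pow_self hp.one_lt).le.trans (Nat.pow_le_pow_right hp.pos (by omega))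
  have hmult : multiplicity p k < k := (Nat.lt_pow_self hp.one_lt).trans_le
    (Nat.le_of_dvd (Nat.pos_of_ne_zero hk0) (pow_multiplicity_dvd p k))
  apply pow_dvd_of_le_emultiplicity
  rw [hp.emultiplicity_choose_prime_pow hkp hk0]
  exact_mod_cast (by omega : n ≤ n + d - multiplicity p k)

theorem pow_prime_pow_add_eq_one_of_sub_one_pow_eq_zero {R : Type*} [Ring R] {x : R}
    {d p n : ℕ} (hp : p.Prime) (hx : (x - 1) ^ d = 0) (hpn : ((p ^ n : ℕ) : R) = 0) :
    x ^ p ^ (n + d) = 1 := by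
  rw [← sub_add_cancel x 1, (Commute.one_right (x - 1)).add_pow, Finset.sum_eq_single 0]
  · simp
  · intro k _ hk0
    rcases le_or_gt k d with hkd | hdk
    · obtain ⟨m, hm⟩ := hp.pow_dvd_choose_pow_add (n := n) hk0 hkd
      rw [hm, Nat.cast_mul, hpn, zero_mul, mul_zero]
    · rw [← Nat.sub_add_cancel hdk.le, pow_add, hx, mul_zero, zero_mul, zero_mul]
  · simp

theorem IsPGroup.eq_one_of_zpow_eq_one {p : ℕ} [Fact p.Prime] {G : Type*} [Group G]
    (hG : IsPGroup p G) {g : G} {m : ℤ} (hm : ¬(p : ℤ) ∣ m) (hg : g ^ m = 1) : g = 1 := by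
  by_contra h
  exact hm (Int.natCast_dvd.2 ((hG.dvd_orderOf h).trans (Int.natCast_dvd.1
    (orderOf_dvd_iff_zpow_eq_one.2 hg))))

theorem IsPGroup.semidirectProduct {p : ℕ} {N G : Type*} [Group N] [Group G]
    {φ : G →* MulAut N} (hN : IsPGroup p N) (hG : IsPGroup p G) : IsPGroup p (N ⋊[φ] G) := by
  have hker : IsPGroup p (SemidirectProduct.rightHom : N ⋊[φ] G →* G).ker := by
    rw [← SemidirectProduct.range_inl_eq_ker_rightHom]
    exact hN.of_surjective _ (SemidirectProduct.inl : N →* N ⋊[φ] G).rangeRestrict_surjective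
  have htop := (hG.to_subgroup ⊤).comap_of_ker_isPGroup _ hker
  rw [Subgroup.comap_top] at htop
  exact htop.of_equiv Subgroup.topEquiv

instance SemidirectProduct.finite {N G : Type*} [Group N] [Group G] [Finite N] [Finite G]
    {φ : G →* MulAut N} : Finite (N ⋊[φ] G) :=
  Finite.of_equiv _ SemidirectProduct.equivProd.symm

theorem SemidirectProduct.commutatorElement_inr_inl {N G : Type*} [Group N] [Group G]
    {φ : G →* MulAut N} (g : G) (n : N) :
    ⁅(inr g : N ⋊[φ] G), (inl n : N ⋊[φ] G)⁆ = inl (φ g n * n⁻¹) := by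
  rw [commutatorElement_def, map_mul, inl_aut, map_inv, map_inv]

def Module.End.unitsToMulAut (R M : Type*) [Semiring R] [AddCommGroup M] [Module R M] :
    (Module.End R M)ˣ →* MulAut (Multiplicative M) :=
  (MulAutMultiplicative M).symm.toMonoidHom.comp (DistribMulAction.toAddAut _ M)

def Module.End.mapPi {R S : Type*} [CommRing R] [CommRing S] (f : R →+* S) (ι : Type*)
    [Fintype ι] [DecidableEq ι] : Module.End R (ι → R) →+* Module.End S (ι → S) :=
  (Matrix.toLinAlgEquiv' : Matrix ι ι S ≃ₐ[S] _).toRingHom.comp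
    (f.mapMatrix.comp (LinearMap.toMatrixAlgEquiv' : _ ≃ₐ[R] Matrix ι ι R).toRingHom)

theorem Module.End.mapPi_apply_comp {R S : Type*} [CommRing R] [CommRing S] (f : R →+* S)
    {ι : Type*} [Fintype ι] [DecidableEq ι] (g : Module.End R (ι → R)) (v : ι → R) :
    mapPi f ι g (f ∘ v) = f ∘ g v := by
  funext i
  simp only [mapPi, RingHom.comp_apply, Function.comp_apply, RingEquiv.toRingHom_eq_coe,
    AlgEquiv.toRingEquiv_toRingHom, RingHom.coe_coe, RingHom.mapMatrix_apply,
    Matrix.toLinAlgEquiv'_apply, ← RingHom.map_mulVec]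
  exact congrArg f (congrFun (LinearMap.toMatrix'_mulVec g v) i)

theorem sdAct_ofAdd_one_apply {d : ℕ} (φ : (Fin d → ℤ) ≃ₗ[ℤ] (Fin d → ℤ)) (w : Fin d → ℤ) :
    sdAct d φ (.ofAdd 1) (.ofAdd w) = .ofAdd (φ w) := by
  simp [sdAct]

theorem sdAct_eq_unitsToMulAut_comp {d : ℕ} (φ : (Fin d → ℤ) ≃ₗ[ℤ] (Fin d → ℤ)) :
    sdAct d φ = (Module.End.unitsToMulAut ℤ _).comp
      (zpowersHom _ ((LinearMap.GeneralLinearGroup.generalLinearEquiv ℤ _).symm φ)) :=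
  MonoidHom.ext_mint rfl

namespace MapTorus

open SemidirectProduct

variable {d : ℕ} (φ : (Fin d → ℤ) ≃ₗ[ℤ] (Fin d → ℤ))

theorem inl_sub_one_pow_mem_lowerCentralSeries (c : ℕ) (u : Fin d → ℤ) :
    (inl (Multiplicative.ofAdd (((φ.toLinearMap - 1) ^ c) u)) : MapTorus d φ) ∈
      (⊤ : Subgroup (MapTorus d φ)).lowerCentralSeries c := by
  induction c generalizing u with
  | zero => trivial
  | succ c ih =>
    have hcomm : (inl (.ofAdd (((φ.toLinearMap - 1) ^ (c + 1)) u)) : MapTorus d φ) =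
        ⁅(inr (.ofAdd 1) : MapTorus d φ), inl (.ofAdd (((φ.toLinearMap - 1) ^ c) u))⁆ := by
      rw [commutatorElement_inr_inl, sdAct_ofAdd_one_apply, pow_succ', Module.End.mul_apply]
      rfl
    rw [hcomm, Subgroup.lowerCentralSeries_succ, Subgroup.commutator_comm]
    exact Subgroup.commutator_mem_commutator trivial (ih u)

noncomputable def reductionAction (q : ℕ) :
    Multiplicative ℤ →* MulAut (Multiplicative (Fin d → ZMod q)) :=
  (Module.End.unitsToMulAut (ZMod q) _).comp (zpowersHom _
    (Units.map (Module.End.mapPi (Int.castRingHom (ZMod q)) (Fin d)).toMonoidHom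
      ((LinearMap.GeneralLinearGroup.generalLinearEquiv ℤ _).symm φ)))

def reductionLeft (q : ℕ) : Multiplicative (Fin d → ℤ) →* Multiplicative (Fin d → ZMod q) :=
  (AddMonoidHom.compLeft (Int.castAddHom (ZMod q)) (Fin d)).toMultiplicative

theorem reductionLeft_sdAct (q : ℕ) (h : Multiplicative ℤ) :
    (reductionLeft q).comp (sdAct d φ h).toMonoidHom =
      (reductionAction φ q h).toMonoidHom.comp (reductionLeft q) := by
  refine MonoidHom.ext fun x => ?_
  rw [sdAct_eq_unitsToMulAut_comp]
  simp only [reductionAction, MonoidHom.comp_apply, zpowersHom_apply, ← map_zpow]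
  generalize (LinearMap.GeneralLinearGroup.generalLinearEquiv ℤ _).symm (φ ^ h.toAdd) = u
  exact (Module.End.mapPi_apply_comp (Int.castRingHom (ZMod q)) (u : Module.End ℤ _) x.toAdd).symm

noncomputable def reduction (q : ℕ) :
    MapTorus d φ →* Multiplicative (Fin d → ZMod q) ⋊[(reductionAction φ q).range.subtype]
      (reductionAction φ q).range :=
  map (reductionLeft q) (reductionAction φ q).rangeRestrict (reductionLeft_sdAct φ q)

theorem isPGroup_reduction {p : ℕ} (hp : p.Prime) (hφ : (φ.toLinearMap - 1) ^ d = 0) (n : ℕ) :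
    IsPGroup p (Multiplicative (Fin d → ZMod (p ^ n)) ⋊[(reductionAction φ (p ^ n)).range.subtype]
      (reductionAction φ (p ^ n)).range) := by
  refine IsPGroup.semidirectProduct (IsPGroup.of_card (n := n * d) ?_) ?_
  · rw [Nat.card_congr Multiplicative.toAdd, Nat.card_pi]
    simp [Nat.card_zmod, pow_mul]
  · set ρ := Module.End.mapPi (Int.castRingHom (ZMod (p ^ n))) (Fin d)
    set u := Units.map ρ.toMonoidHom ((LinearMap.GeneralLinearGroup.generalLinearEquiv ℤ _).symm φ)
    have hu : u ^ p ^ (n + d) = 1 := by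
      refine Units.ext (pow_prime_pow_add_eq_one_of_sub_one_pow_eq_zero hp ?_ ?_)
      · change (ρ φ.toLinearMap - 1) ^ d = 0
        rw [← map_one ρ, ← map_sub, ← map_pow, hφ, map_zero]
      · rw [← map_natCast (algebraMap (ZMod (p ^ n)) _), ZMod.natCast_self, map_zero]
    rw [reductionAction, MonoidHom.range_comp, Subgroup.range_zpowersHom]
    exact (IsPGroup.of_card_dvd_pow
      ((Nat.card_zpowers u).symm ▸ orderOf_dvd_of_pow_eq_one hu)).map _

end MapTorus

theorem unipotent_of_forall_residuallyP {d : ℕ} {φ : (Fin d → ℤ) ≃ₗ[ℤ] (Fin d → ℤ)}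
    (h : ∀ p : ℕ, p.Prime → ResiduallyP p (MapTorus d φ)) : (φ.toLinearMap - 1) ^ d = 0 := by
  by_contra hφ
  obtain ⟨a, ha, v, hv, hav⟩ := Module.End.exists_smul_pow_mem_range_pow
    (f := φ.toLinearMap - 1) (by rwa [Module.finrank_fin_fun])
  obtain ⟨p, hp, hpa⟩ := Int.exists_prime_not_dvd ha
  have : Fact p.Prime := ⟨hp⟩
  obtain ⟨P, _, _, f, hP, hf⟩ := h p hp (SemidirectProduct.inl (.ofAdd v))
    ((map_ne_one_iff _ SemidirectProduct.inl_injective).2 (by simpa using hv))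
  obtain ⟨c, hc⟩ := Subgroup.nilpotent_iff_lowerCentralSeries.1 hP.isNilpotent
  obtain ⟨u, hu⟩ := hav c
  have hkill : f (SemidirectProduct.inl (.ofAdd (a ^ c • v))) = 1 := by
    have hmem := Subgroup.mem_map_of_mem f (MapTorus.inl_sub_one_pow_mem_lowerCentralSeries φ c u)
    rw [Subgroup.map_lowerCentralSeries, hu] at hmem
    rw [← Subgroup.mem_bot, ← hc]
    exact Subgroup.lowerCentralSeries_mono c le_top hmem
  rw [ofAdd_zsmul, map_zpow, map_zpow] at hkill
  exact hf (hP.eq_one_of_zpow_eq_one (fun hdvd => hpa (Int.Prime.dvd_pow' hp hdvd)) hkill)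

theorem residuallyP_of_unipotent {d : ℕ} {φ : (Fin d → ℤ) ≃ₗ[ℤ] (Fin d → ℤ)}
    (hφ : (φ.toLinearMap - 1) ^ d = 0) {p : ℕ} (hp : p.Prime) : ResiduallyP p (MapTorus d φ) := by
  intro g hg
  by_cases hright : g.right = 1
  · obtain ⟨i, hi⟩ : ∃ i, g.left.toAdd i ≠ 0 := by
      by_contra! h
      exact hg (SemidirectProduct.ext (funext h) hright)
    obtain ⟨n, hn⟩ := Int.exists_cast_zmod_prime_pow_ne_zero hp hi
    have : NeZero (p ^ n) := ⟨pow_ne_zero n hp.ne_zero⟩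
    exact ⟨_, _, inferInstance, MapTorus.reduction φ (p ^ n),
      MapTorus.isPGroup_reduction φ hp hφ n,
      fun h => hn (congrFun (congrArg (fun y => y.left.toAdd) h) i)⟩
  · obtain ⟨n, hn⟩ := Int.exists_cast_zmod_prime_pow_ne_zero hp (z := g.right.toAdd) hright
    have : NeZero (p ^ n) := ⟨pow_ne_zero n hp.ne_zero⟩
    refine ⟨Multiplicative (ZMod (p ^ n)), _, inferInstance,
      (Int.castAddHom _).toMultiplicative.comp SemidirectProduct.rightHom,
      IsPGroup.of_card (n := n) ?_, hn⟩
    rw [Nat.card_congr Multiplicative.toAdd, Nat.card_zmod]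

theorem residually_p_forall_iff_unipotent (d : ℕ) (φ : (Fin d → ℤ) ≃ₗ[ℤ] (Fin d → ℤ)) :
    (∀ p : ℕ, p.Prime → ResiduallyP p (MapTorus d φ)) ↔ (φ.toLinearMap - 1) ^ d = 0 :=
  ⟨unipotent_of_forall_residuallyP, fun hφ _ hp => residuallyP_of_unipotent hφ hp⟩
end

section
/- Let φ be an automorphism of ℤ^d and G = ℤ ⋉_φ ℤ^d. Then G has a finite-index subgroup which is nilpotent if and only if φ is quasi-unipotent, i.e., φ^k is unipotent for some k > 0. -/
open scoped commutatorElement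

namespace SemidirectProduct

variable {N G : Type*} [CommGroup N] [Group G] {φ : G →* MulAut N}

theorem commutatorElement_inl_right (g : N ⋊[φ] G) (n : N) :
    ⁅g, (inl n : N ⋊[φ] G)⁆ = inl (φ g.right n / n) := by
  ext <;> simp [commutatorElement_def, div_eq_mul_inv, mul_comm, mul_left_comm]

theorem commutatorElement_inl_left (n : N) (g : N ⋊[φ] G) :
    ⁅(inl n : N ⋊[φ] G), g⁆ = inl (n / φ g.right n) := by
  rw [← commutatorElement_inv, commutatorElement_inl_right, ← map_inv, inv_div]

end SemidirectProduct

theorem Group.IsNilpotent.exists_iterate_commutatorElement_eq_one (G : Type*) [Group G]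
    [Group.IsNilpotent G] : ∃ n : ℕ, ∀ g x : G, (⁅g, ·⁆)^[n] x = 1 := by
  obtain ⟨n, hn⟩ := Group.IsNilpotent.nilpotent G
  suffices h : ∀ j, ∀ g x : G, x ∈ Subgroup.upperCentralSeries G j → (⁅g, ·⁆)^[j] x = 1 from
    ⟨n, fun g x => h n g x (hn ▸ Subgroup.mem_top x :)⟩
  intro j
  induction j with
  | zero => exact fun _ _ hx => hx
  | succ j ih =>
    intro g x hx
    rw [Function.iterate_succ_apply]
    refine ih g _ ?_
    rw [← commutatorElement_inv]
    exact inv_mem (Subgroup.mem_upperCentralSeries_succ_iff.mp hx g)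

theorem Subgroup.exists_iterate_commutatorElement_eq_one {G : Type*} [Group G] (H : Subgroup G)
    [Group.IsNilpotent H] : ∃ n : ℕ, ∀ g ∈ H, ∀ x ∈ H, (⁅g, ·⁆)^[n] x = 1 := by
  obtain ⟨n, hn⟩ := Group.IsNilpotent.exists_iterate_commutatorElement_eq_one H
  refine ⟨n, fun g hg x hx => ?_⟩
  have hcoe : Function.Semiconj ((↑) : H → G) (⁅(⟨g, hg⟩ : H), ·⁆) (⁅g, ·⁆) := fun _ => rfl
  exact (hcoe.iterate_right n ⟨x, hx⟩).symm.trans (congrArg _ (hn _ _))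

theorem IsNilpotent.pow_finrank_eq_zero {R M : Type*} [CommRing R] [IsDomain R]
    [AddCommGroup M] [Module R M] [Module.Finite R M] [Module.Free R M] {f : Module.End R M}
    (hf : IsNilpotent f) : f ^ Module.finrank R M = 0 := by
  simpa only [hf.charpoly_eq_X_pow_finrank, map_pow, Polynomial.aeval_X] using f.aeval_self_charpoly

section

variable {R M : Type*} [Ring R] [AddCommGroup M] [Module R M]

theorem LinearEquiv.toLinearMap_pow (ψ : M ≃ₗ[R] M) (k : ℕ) :
    (ψ ^ k).toLinearMap = ψ.toLinearMap ^ k :=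
  map_pow LinearEquiv.automorphismGroup.toLinearMapMonoidHom ψ k

theorem LinearEquiv.zpow_apply_eq_self {ψ : M ≃ₗ[R] M} {w : M} (hw : ψ w = w) (m : ℤ) :
    (ψ ^ m) w = w :=
  (zpow_mem (MulAction.mem_stabilizer_iff.mpr hw) m : ψ ^ m ∈ MulAction.stabilizer _ w)

theorem LinearEquiv.sub_one_pow_apply_zpow_apply_sub (ψ : M ≃ₗ[R] M) (m : ℤ) {j : ℕ} {v : M}
    (hv : ((ψ.toLinearMap - 1) ^ (j + 1)) v = 0) :
    ((ψ.toLinearMap - 1) ^ j) ((ψ ^ m) v - v) = 0 := by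
  set N := ψ.toLinearMap - 1
  have hcomm : Commute (ψ ^ m).toLinearMap (N ^ j) := by
    have := (Commute.refl ψ).zpow_left m |>.map LinearEquiv.automorphismGroup.toLinearMapMonoidHom
    exact (this.sub_right (Commute.one_right _)).pow_right j
  have hfix : ψ ((N ^ j) v) = (N ^ j) v := by
    rw [pow_succ', Module.End.mul_apply] at hv
    simpa [N, sub_eq_zero] using hv
  have := LinearMap.congr_fun hcomm.eq v
  simp only [Module.End.mul_apply, LinearEquiv.coe_coe] at this
  rw [map_sub, ← this, LinearEquiv.zpow_apply_eq_self hfix, sub_self]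
end


namespace MapTorus

open SemidirectProduct Multiplicative

variable {d : ℕ} {φ : (Fin d → ℤ) ≃ₗ[ℤ] (Fin d → ℤ)}

theorem sdAct_apply (g : Multiplicative ℤ) (v : Fin d → ℤ) :
    sdAct d φ g (ofAdd v) = ofAdd ((φ ^ g.toAdd) v) := by
  let toMulAut : ((Fin d → ℤ) ≃ₗ[ℤ] (Fin d → ℤ)) →* MulAut (Multiplicative (Fin d → ℤ)) :=
    { toFun e := AddEquiv.toMultiplicative e.toAddEquiv, map_one' := rfl, map_mul' _ _ := rfl }
  change (toMulAut φ ^ g.toAdd) (ofAdd v) = _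
  rw [← map_zpow]
  rfl

theorem commutatorElement_inl_left (v : Fin d → ℤ) (g : MapTorus d φ) :
    ⁅(inl (ofAdd v) : MapTorus d φ), g⁆ = inl (ofAdd (v - (φ ^ g.right.toAdd) v)) := by
  rw [SemidirectProduct.commutatorElement_inl_left, sdAct_apply, ofAdd_sub]

theorem iterate_commutatorElement_inr_inl (k n : ℕ) (v : Fin d → ℤ) :
    (⁅(inr (ofAdd (k : ℤ)) : MapTorus d φ), ·⁆)^[n] (inl (ofAdd v)) =
      (inl (ofAdd (((φ.toLinearMap ^ k - 1) ^ n) v)) : MapTorus d φ) := by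
  have hpow (w : Fin d → ℤ) : (φ ^ k) w = (φ.toLinearMap ^ k) w := by
    rw [← LinearEquiv.toLinearMap_pow, LinearEquiv.coe_coe]
  induction n with
  | zero => rfl
  | succ n ih =>
    rw [Function.iterate_succ_apply', ih, SemidirectProduct.commutatorElement_inl_right,
      right_inr, sdAct_apply, toAdd_ofAdd, zpow_natCast, hpow, ← ofAdd_sub, pow_succ',
      Module.End.mul_apply, LinearMap.sub_apply, Module.End.one_apply]

theorem inl_mem_upperCentralSeries {j : ℕ} {v : Fin d → ℤ}
    (hv : ((φ.toLinearMap - 1) ^ j) v = 0) :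
    (inl (ofAdd v) : MapTorus d φ) ∈ Subgroup.upperCentralSeries _ j := by
  induction j generalizing v with
  | zero =>
    rw [pow_zero, Module.End.one_apply] at hv
    simp [hv]
  | succ j ih =>
    intro y
    rw [commutatorElement_inl_left]
    refine ih ?_
    rw [← neg_sub ((φ ^ y.right.toAdd) v), map_neg, φ.sub_one_pow_apply_zpow_apply_sub _ hv,
      neg_zero]

theorem isNilpotent_of_isNilpotent_sub_one (h : IsNilpotent (φ.toLinearMap - 1)) :
    Group.IsNilpotent (MapTorus d φ) := by
  obtain ⟨n, hn⟩ := h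
  refine ⟨n + 1, eq_top_iff.mpr fun x _ y => ?_⟩
  have hker : ⁅x, y⁆ ∈ (rightHom : MapTorus d φ →* _).ker := by
    rw [MonoidHom.mem_ker, map_commutatorElement, commutatorElement_eq_one_iff_mul_comm, mul_comm]
  rw [← range_inl_eq_ker_rightHom] at hker
  obtain ⟨w, hw⟩ := hker
  rw [← hw, ← ofAdd_toAdd w]
  exact inl_mem_upperCentralSeries (by rw [hn, LinearMap.zero_apply])

theorem sdAct_pow (k : ℕ) : sdAct d (φ ^ k) = (sdAct d φ).comp (powMonoidHom k) := by
  refine MonoidHom.ext fun g => MulEquiv.ext fun v => ?_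
  rw [MonoidHom.comp_apply, powMonoidHom_apply, ← ofAdd_toAdd v, sdAct_apply, sdAct_apply,
    toAdd_pow, ← zpow_natCast, ← zpow_mul, nsmul_eq_mul]

def ofPow (k : ℕ) : MapTorus d (φ ^ k) →* MapTorus d φ :=
  SemidirectProduct.map (MonoidHom.id _) (powMonoidHom k) fun g => by
    rw [sdAct_pow]
    rfl

theorem finiteIndex_range_ofPow {k : ℕ} (hk : 0 < k) : (ofPow (φ := φ) k).range.FiniteIndex := by
  let H : Subgroup (MapTorus d φ) :=
    (AddSubgroup.zmultiples (k : ℤ)).toSubgroup.comap rightHom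
  have hH : H.FiniteIndex := by
    rw [Subgroup.finiteIndex_iff, Subgroup.index_comap_of_surjective _ rightHom_surjective,
      AddSubgroup.index_toSubgroup, Int.index_zmultiples]
    omega
  refine Subgroup.finiteIndex_of_le (H := H) fun x hx => ?_
  obtain ⟨m, hm : m • (k : ℤ) = (rightHom x).toAdd⟩ := hx
  refine ⟨⟨x.left, ofAdd m⟩, ?_⟩
  ext
  · rfl
  · change ofAdd m ^ k = x.right
    rw [← ofAdd_toAdd x.right, ← ofAdd_nsmul, ← rightHom_eq_right, ← hm, smul_eq_mul,
      nsmul_eq_mul, mul_comm]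

theorem isVirtuallyNilpotent_of_isNilpotent_pow_sub_one {k : ℕ} (hk : 0 < k)
    (h : IsNilpotent (φ.toLinearMap ^ k - 1)) : Group.IsVirtuallyNilpotent (MapTorus d φ) := by
  have : Group.IsNilpotent (MapTorus d (φ ^ k)) := isNilpotent_of_isNilpotent_sub_one (by
    rwa [LinearEquiv.toLinearMap_pow])
  exact ⟨_, Group.nilpotent_of_surjective _ (ofPow k).rangeRestrict_surjective,
    finiteIndex_range_ofPow hk⟩

theorem exists_isNilpotent_pow_sub_one_of_isVirtuallyNilpotent
    (h : Group.IsVirtuallyNilpotent (MapTorus d φ)) :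
    ∃ k : ℕ, 0 < k ∧ IsNilpotent (φ.toLinearMap ^ k - 1) := by
  obtain ⟨H, hH, hfin⟩ := h
  obtain ⟨n, hn⟩ := H.exists_iterate_commutatorElement_eq_one
  obtain ⟨k, hk, -, hkH⟩ :=
    H.exists_pow_mem_of_index_ne_zero hfin.index_ne_zero (inr (ofAdd 1))
  rw [← map_pow, ← ofAdd_nsmul, nsmul_one] at hkH
  refine ⟨k, hk, n, LinearMap.ext fun v => ?_⟩
  obtain ⟨M, hM, -, hMH⟩ :=
    H.exists_pow_mem_of_index_ne_zero hfin.index_ne_zero (inl (ofAdd v))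
  rw [← map_pow, ← ofAdd_nsmul] at hMH
  have := hn _ hkH _ hMH
  rw [iterate_commutatorElement_inr_inl, map_eq_one_iff _ inl_injective, ofAdd_eq_one,
    map_nsmul, smul_eq_zero] at this
  exact this.resolve_left hM.ne'

theorem isVirtuallyNilpotent_iff :
    Group.IsVirtuallyNilpotent (MapTorus d φ) ↔
      ∃ k : ℕ, 0 < k ∧ IsNilpotent (φ.toLinearMap ^ k - 1) :=
  ⟨exists_isNilpotent_pow_sub_one_of_isVirtuallyNilpotent,
    fun ⟨_, hk, h⟩ => isVirtuallyNilpotent_of_isNilpotent_pow_sub_one hk h⟩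

end MapTorus

theorem virtually_nilpotent_iff_quasiunipotent (d : ℕ)
    (φ : (Fin d → ℤ) ≃ₗ[ℤ] (Fin d → ℤ)) :
    (∃ H : Subgroup (MapTorus d φ), H.FiniteIndex ∧ Group.IsNilpotent H) ↔
      ∃ k : ℕ, 0 < k ∧ (φ.toLinearMap ^ k - 1) ^ d = 0 := by
  have isNilpotent_iff_pow_eq_zero (f : Module.End ℤ (Fin d → ℤ)) : IsNilpotent f ↔ f ^ d = 0 :=
    ⟨fun hf => by simpa using hf.pow_finrank_eq_zero, fun hf => ⟨d, hf⟩⟩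
  simp only [← isNilpotent_iff_pow_eq_zero, ← MapTorus.isVirtuallyNilpotent_iff,
    Group.IsVirtuallyNilpotent, and_comm]
end

section
/- Let p be a prime, A = ℤ^d, φ ∈ Aut(A), and let φ̄ be the induced automorphism of Ā = A/pA ≅ 𝔽_p^d. Then the following are equivalent: (1) the semidirect product ℤ ⋉_{φ̄} Ā is residually p; (2) φ̄ is unipotent; (3) φ̄^{p^k} = id for some integer k > 0. -/
/-- The action of `ℤ` on `𝔽_p^d` where `1` acts by `ψ`. -/
def sdActP (p d : ℕ) [Fact p.Prime] (ψ : (Fin d → ZMod p) ≃ₗ[ZMod p] (Fin d → ZMod p)) :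
    Multiplicative ℤ →* MulAut (Multiplicative (Fin d → ZMod p)) :=
  zpowersHom _ (AddEquiv.toMultiplicative ψ.toAddEquiv)

/-- The semidirect product `ℤ ⋉_ψ 𝔽_p^d`. -/
abbrev MapTorusP (p d : ℕ) [Fact p.Prime]
    (ψ : (Fin d → ZMod p) ≃ₗ[ZMod p] (Fin d → ZMod p)) :=
  Multiplicative (Fin d → ZMod p) ⋊[sdActP p d ψ] Multiplicative ℤ

/-! In characteristic `p`, `(ψ - 1) ^ p ^ k = ψ ^ p ^ k - 1`, so `ψ` is unipotent exactly when it
has `p`-power order. If `ψ ^ p ^ k = 1`, the group maps onto the finite `p`-groups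
`𝔽_p^d ⋊ ℤ/p^n`, and for `n` large such a map detects any given element. Conversely, in a finite
`p`-group quotient the image of the generator of `ℤ` has some order `p ^ k`, so the quotient kills
every `(ψ ^ p ^ k - 1) a`. If `ψ - 1` is not nilpotent, its eventual image
`⨅ n, range ((ψ - 1) ^ n)` is nonzero and consists of elements of this form for every `k`. -/

open SemidirectProduct

theorem isNilpotent_iff_exists_pow_pow_eq_zero {M : Type*} [MonoidWithZero M] {p : ℕ}
    (hp : 1 < p) (a : M) : IsNilpotent a ↔ ∃ k, 0 < k ∧ a ^ p ^ k = 0 := by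
  refine ⟨fun ⟨n, hn⟩ ↦ ⟨n + 1, n.succ_pos, pow_eq_zero_of_le ?_ hn⟩, fun ⟨k, _, hk⟩ ↦ ⟨_, hk⟩⟩
  exact (Nat.lt_pow_self hp).le.trans (Nat.pow_le_pow_right (by omega) n.le_succ)

namespace Module.End

theorem iInf_range_pow_ne_bot {R M : Type*} [Ring R] [AddCommGroup M] [Module R M]
    [IsArtinian R M] {f : End R M} (hf : ¬IsNilpotent f) :
    ⨅ n, LinearMap.range (f ^ n) ≠ ⊥ := by
  obtain ⟨n, hn⟩ := f.eventually_iInf_range_pow_eq.exists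
  rw [hn]
  exact fun h ↦ hf ⟨n, LinearMap.range_eq_bot.mp h⟩

variable {K V : Type*} [Field K] [AddCommGroup V] [Module K V]

theorem pow_finrank_eq_zero_iff_isNilpotent [FiniteDimensional K V] (f : End K V) :
    f ^ finrank K V = 0 ↔ IsNilpotent f :=
  ⟨fun h ↦ ⟨_, h⟩, fun h ↦ by simpa [h.charpoly_eq_X_pow_finrank] using f.aeval_self_charpoly⟩

theorem sub_one_pow_char_pow (p : ℕ) [Fact p.Prime] [CharP K p] (f : End K V) (k : ℕ) :
    (f - 1) ^ p ^ k = f ^ p ^ k - 1 := by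
  rcases subsingleton_or_nontrivial V with _ | _
  · exact Subsingleton.elim _ _
  · have := charP_of_injective_algebraMap' K (A := End K V) p
    rw [sub_pow_char_pow_of_commute p k (Commute.one_right f), one_pow]

theorem sub_one_pow_finrank_eq_zero_iff (p : ℕ) [Fact p.Prime] [CharP K p]
    [FiniteDimensional K V] (f : End K V) :
    (f - 1) ^ finrank K V = 0 ↔ ∃ k, 0 < k ∧ f ^ p ^ k = 1 := by
  rw [pow_finrank_eq_zero_iff_isNilpotent,
    isNilpotent_iff_exists_pow_pow_eq_zero (Fact.out : p.Prime).one_lt]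
  simp_rw [sub_one_pow_char_pow p, sub_eq_zero]

end Module.End

section LinearEquiv

variable {R V : Type*} [Semiring R] [AddCommMonoid V] [Module R V]

theorem LinearEquiv.toMultiplicative_pow_apply (ψ : V ≃ₗ[R] V) (m : ℕ) (v : V) :
    (AddEquiv.toMultiplicative ψ.toAddEquiv ^ m) (.ofAdd v) =
      .ofAdd ((ψ.toLinearMap ^ m) v) := by
  induction m with
  | zero => rfl
  | succ m ih => rw [pow_succ', MulAut.mul_apply, ih, pow_succ', Module.End.mul_apply]; rfl

theorem LinearEquiv.toMultiplicative_pow_eq_one {ψ : V ≃ₗ[R] V} {m : ℕ}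
    (h : ψ.toLinearMap ^ m = 1) : AddEquiv.toMultiplicative ψ.toAddEquiv ^ m = 1 := by
  ext x
  simpa [h] using ψ.toMultiplicative_pow_apply m x.toAdd

end LinearEquiv

section MappingTorus

variable {N : Type*} [Group N] (σ : MulAut N)

theorem map_inl_pow_apply_of_pow_eq_one {P : Type*} [Group P]
    (f : N ⋊[zpowersHom (MulAut N) σ] Multiplicative ℤ →* P) {m : ℕ}
    (hm : f (inr (.ofAdd 1)) ^ m = 1) (x : N) : f (inl ((σ ^ m) x)) = f (inl x) := by
  have ht : f (inr (.ofAdd (m : ℤ))) = 1 := by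
    rw [← hm, ← map_pow, ← map_pow, ← ofAdd_nsmul, nsmul_one]
  have hσ : σ ^ m = zpowersHom (MulAut N) σ (.ofAdd (m : ℤ)) := by simp
  rw [hσ, inl_aut, map_mul, map_mul, map_inv, map_inv, ht, one_mul, inv_one, mul_one]

theorem eq_one_of_residuallyP {p : ℕ}
    (hG : ResiduallyP p (N ⋊[zpowersHom (MulAut N) σ] Multiplicative ℤ)) {x : N}
    (hx : ∀ k, ∃ y, x = (σ ^ p ^ k) y * y⁻¹) : x = 1 := by
  by_contra hx1
  obtain ⟨P, _, _, f, hP, hfx⟩ := hG (inl x) ((map_ne_one_iff _ inl_injective).mpr hx1)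
  obtain ⟨k, hk⟩ := hP (f (inr (.ofAdd 1)))
  obtain ⟨y, rfl⟩ := hx k
  rw [map_mul, map_inv, map_mul, map_inv, map_inl_pow_apply_of_pow_eq_one σ f hk,
    mul_inv_cancel] at hfx
  exact hfx rfl

def zmodPowersHom {G : Type*} [Group G] (g : G) {m : ℕ} (hg : g ^ m = 1) :
    Multiplicative (ZMod m) →* G :=
  AddMonoidHom.toMultiplicativeLeft <| ZMod.lift m
    ⟨zmultiplesHom (Additive G) (.ofMul g), by simp [← ofMul_pow, hg]⟩

theorem zmodPowersHom_intCast {G : Type*} [Group G] (g : G) {m : ℕ} (hg : g ^ m = 1) (z : ℤ) :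
    zmodPowersHom g hg (.ofAdd (z : ZMod m)) = g ^ z := by
  simp [zmodPowersHom, ZMod.lift_coe, ← ofMul_zpow]

def reduceMod {m : ℕ} (hσ : σ ^ m = 1) :
    N ⋊[zpowersHom (MulAut N) σ] Multiplicative ℤ →*
      N ⋊[zmodPowersHom σ hσ] Multiplicative (ZMod m) :=
  map (.id N) (AddMonoidHom.toMultiplicative (Int.castAddHom (ZMod m))) fun z ↦ by
    ext x
    simp [zmodPowersHom_intCast]

theorem reduceMod_eq_one_iff {m : ℕ} (hσ : σ ^ m = 1)
    (g : N ⋊[zpowersHom (MulAut N) σ] Multiplicative ℤ) :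
    reduceMod σ hσ g = 1 ↔ g.left = 1 ∧ ((g.right.toAdd : ℤ) : ZMod m) = 0 := by
  simp [reduceMod, SemidirectProduct.ext_iff]

end MappingTorus

theorem residuallyP_of_pow_prime_pow_eq_one {N : Type} [Group N] [Finite N] {p : ℕ}
    [Fact p.Prime] (hN : IsPGroup p N) (σ : MulAut N) {k : ℕ} (hσ : σ ^ p ^ k = 1) :
    ResiduallyP p (N ⋊[zpowersHom (MulAut N) σ] Multiplicative ℤ) := by
  intro g hg
  set z : ℤ := g.right.toAdd
  set n := max k z.natAbs
  have hσn : σ ^ p ^ n = 1 := orderOf_dvd_iff_pow_eq_one.mp <|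
    (orderOf_dvd_of_pow_eq_one hσ).trans (pow_dvd_pow p (le_max_left _ _))
  have : NeZero (p ^ n) := ⟨pow_ne_zero _ (Fact.out : p.Prime).ne_zero⟩
  let Q := N ⋊[zmodPowersHom σ hσn] Multiplicative (ZMod (p ^ n))
  have : Finite Q := .of_equiv _ equivProd.symm
  obtain ⟨a, ha⟩ := IsPGroup.iff_card.mp hN
  have hQ : Nat.card Q = p ^ (a + n) := by
    rw [card, ha, Nat.card_eq_fintype_card, Fintype.card_multiplicative, ZMod.card, pow_add]
  refine ⟨Q, inferInstance, inferInstance, reduceMod σ hσn, .of_card hQ, fun h ↦ hg ?_⟩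
  obtain ⟨hleft, hright⟩ := (reduceMod_eq_one_iff σ hσn g).mp h
  have hz_lt : z.natAbs < p ^ n :=
    (le_max_right k z.natAbs).trans_lt (Nat.lt_pow_self (Fact.out : p.Prime).one_lt)
  have hz : z = 0 := Int.eq_zero_of_dvd_of_natAbs_lt_natAbs
    ((ZMod.intCast_zmod_eq_zero_iff_dvd z (p ^ n)).mp hright) (by simpa using hz_lt)
  exact SemidirectProduct.ext hleft hz

theorem LinearEquiv.isNilpotent_sub_one_of_residuallyP {K V : Type*} [Field K] [AddCommGroup V]
    [Module K V] [FiniteDimensional K V] (p : ℕ) [Fact p.Prime] [CharP K p] (ψ : V ≃ₗ[K] V)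
    (h : ResiduallyP p (Multiplicative V ⋊[zpowersHom _ (AddEquiv.toMultiplicative ψ.toAddEquiv)]
      Multiplicative ℤ)) :
    IsNilpotent (ψ.toLinearMap - 1) := by
  by_contra hnil
  obtain ⟨b, hb, hb0⟩ :=
    Submodule.exists_mem_ne_zero_of_ne_bot (Module.End.iInf_range_pow_ne_bot hnil)
  refine hb0 (ofAdd_eq_one.mp (eq_one_of_residuallyP _ h fun k ↦ ?_))
  obtain ⟨a, rfl⟩ := Submodule.mem_iInf _ |>.mp hb (p ^ k)
  refine ⟨.ofAdd a, ?_⟩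
  rw [ψ.toMultiplicative_pow_apply, Module.End.sub_one_pow_char_pow p, LinearMap.sub_apply,
    ofAdd_sub, Module.End.one_apply, div_eq_mul_inv]

theorem mod_p_residually_p_tfae_general (p d : ℕ) [Fact p.Prime]
    (ψ : (Fin d → ZMod p) ≃ₗ[ZMod p] (Fin d → ZMod p)) :
    (ResiduallyP p (MapTorusP p d ψ) ↔ (ψ.toLinearMap - 1) ^ d = 0) ∧
      ((ψ.toLinearMap - 1) ^ d = 0 ↔ ∃ k : ℕ, 0 < k ∧ ψ.toLinearMap ^ p ^ k = 1) := by
  have hunip := Module.End.sub_one_pow_finrank_eq_zero_iff p ψ.toLinearMap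
  have hnil := Module.End.pow_finrank_eq_zero_iff_isNilpotent (ψ.toLinearMap - 1)
  rw [Module.finrank_fin_fun] at hunip hnil
  refine ⟨⟨fun h ↦ hnil.mpr (ψ.isNilpotent_sub_one_of_residuallyP p h), fun h ↦ ?_⟩, hunip⟩
  obtain ⟨k, -, hk⟩ := hunip.mp h
  exact residuallyP_of_pow_prime_pow_eq_one (.of_card (n := d) (by simp)) _
    (ψ.toMultiplicative_pow_eq_one hk)

theorem mod_p_residually_p_tfae (p d : ℕ) [Fact p.Prime]
    (φ : (Fin d → ℤ) ≃ₗ[ℤ] (Fin d → ℤ))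
    (ψ : (Fin d → ZMod p) ≃ₗ[ZMod p] (Fin d → ZMod p))
    (hcomm : ∀ x : Fin d → ℤ, ψ (fun i => (x i : ZMod p)) = fun i => ((φ x i : ℤ) : ZMod p)) :
    (ResiduallyP p (MapTorusP p d ψ) ↔ (ψ.toLinearMap - 1) ^ d = 0) ∧
      ((ψ.toLinearMap - 1) ^ d = 0 ↔ ∃ k : ℕ, 0 < k ∧ ψ.toLinearMap ^ p ^ k = 1) :=
  mod_p_residually_p_tfae_general p d ψ
end

section
/- Let π be a group such that for every prime p, π has a finite-index subgroup that is residually p. Let g ∈ π have infinite order and let m be a positive integer. Then there exists a homomorphism α from π onto a finite group G such that m divides the order of α(g). -/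
/-!
Fix a prime `p` dividing `m`, say `p ^ k ∥ m`, and a finite-index subgroup `H` that is residually
`p`. Some power `g ^ n` lies in `H` and still has infinite order, so `(g ^ n) ^ (p ^ k) ≠ 1`
survives in a finite `p`-group quotient of `H`; there the order of `g ^ n` is a power of `p`
exceeding `p ^ k`. The normal core in `π` of the kernel of that quotient is a finite-index normal
subgroup modulo which the order of `g` is divisible by `p ^ k`. Intersecting these normal
subgroups over the primes dividing `m` gives a finite quotient in which `m` divides the order
of `g`.
-/

theorem orderOf_dvd_orderOf_of_ker_le {G A B : Type*} [Group G] [Monoid A] [Monoid B]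
    {φ : G →* A} {ψ : G →* B} (hker : ψ.ker ≤ φ.ker) (x : G) :
    orderOf (φ x) ∣ orderOf (ψ x) := by
  apply orderOf_dvd_of_pow_eq_one
  have hx : x ^ orderOf (ψ x) ∈ ψ.ker := by
    rw [MonoidHom.mem_ker, map_pow, pow_orderOf_eq_one]
  rw [← map_pow]
  exact hker hx

theorem ResiduallyP.exists_pow_dvd_orderOf {p : ℕ} [Fact p.Prime] {G : Type*} [Group G]
    (hres : ResiduallyP p G) {x : G} (hx : ¬IsOfFinOrder x) (k : ℕ) :
    ∃ (P : Type) (_ : Group P) (_ : Finite P) (f : G →* P), p ^ k ∣ orderOf (f x) := by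
  have hxk : x ^ p ^ k ≠ 1 := fun h ↦
    hx (isOfFinOrder_iff_pow_eq_one.mpr ⟨p ^ k, pow_pos (Fact.out : p.Prime).pos k, h⟩)
  obtain ⟨P, _, _, f, hP, hf⟩ := hres _ hxk
  obtain ⟨j, hj⟩ := IsPGroup.iff_orderOf.mp hP (f x)
  refine ⟨P, inferInstance, inferInstance, f, hj ▸ pow_dvd_pow p ?_⟩
  by_contra! hjk
  apply hf
  rw [map_pow, ← orderOf_dvd_iff_pow_eq_one, hj]
  exact pow_dvd_pow p hjk.le

theorem Subgroup.exists_normal_finiteIndex_subgroupOf_le_ker {G P : Type*} [Group G] [Group P]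
    [Finite P] {H : Subgroup G} [H.FiniteIndex] (f : H →* P) :
    ∃ N : Subgroup G, N.Normal ∧ N.FiniteIndex ∧ N.subgroupOf H ≤ f.ker := by
  have : (f.ker.map H.subtype).FiniteIndex :=
    ⟨by
      rw [index_map_subtype]
      exact mul_ne_zero FiniteIndex.index_ne_zero FiniteIndex.index_ne_zero⟩
  refine ⟨(f.ker.map H.subtype).normalCore, inferInstance, inferInstance, fun x hx ↦ ?_⟩
  obtain ⟨y, hy, hyx⟩ := normalCore_le _ hx
  rwa [← H.subtype_injective hyx]

theorem exists_normal_finiteIndex_pow_dvd_orderOf {π : Type*} [Group π] {p : ℕ} [Fact p.Prime]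
    {H : Subgroup π} [H.FiniteIndex] (hres : ResiduallyP p H)
    {g : π} (hg : ¬IsOfFinOrder g) (k : ℕ) :
    ∃ (N : Subgroup π) (_ : N.Normal), N.FiniteIndex ∧
      p ^ k ∣ orderOf (QuotientGroup.mk g : π ⧸ N) := by
  obtain ⟨n, hn, -, hgn⟩ :=
    H.exists_pow_mem_of_index_ne_zero Subgroup.FiniteIndex.index_ne_zero g
  have hinf : ¬IsOfFinOrder (⟨g ^ n, hgn⟩ : H) := fun h ↦
    (isOfFinOrder_pow.mp (H.subtype.isOfFinOrder h)).elim hg hn.ne'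
  obtain ⟨P, _, _, f, hf⟩ := hres.exists_pow_dvd_orderOf hinf k
  obtain ⟨N, hN, hNfin, hNf⟩ :=
    Subgroup.exists_normal_finiteIndex_subgroupOf_le_ker (H := H) f
  refine ⟨N, hN, hNfin, ?_⟩
  have hker : ((QuotientGroup.mk' N).comp H.subtype).ker ≤ f.ker := fun x hx ↦
    hNf ((QuotientGroup.eq_one_iff (x : π)).mp hx)
  calc p ^ k ∣ orderOf (f ⟨g ^ n, hgn⟩) := hf
    _ ∣ orderOf (QuotientGroup.mk (g ^ n) : π ⧸ N) := orderOf_dvd_orderOf_of_ker_le hker _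
    _ ∣ orderOf (QuotientGroup.mk g : π ⧸ N) := by
      rw [QuotientGroup.mk_pow]; exact orderOf_pow_dvd n

theorem exists_normal_finiteIndex_dvd_orderOf {π : Type*} [Group π]
    (hvirt : ∀ p : ℕ, p.Prime → ∃ H : Subgroup π, H.FiniteIndex ∧ ResiduallyP p H)
    {g : π} (hg : ¬IsOfFinOrder g) {m : ℕ} (hm : m ≠ 0) :
    ∃ (N : Subgroup π) (_ : N.Normal), N.FiniteIndex ∧
      m ∣ orderOf (QuotientGroup.mk g : π ⧸ N) := by
  have hlocal : ∀ p : m.primeFactors, ∃ (N : Subgroup π) (_ : N.Normal), N.FiniteIndex ∧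
      (p : ℕ) ^ m.factorization p ∣ orderOf (QuotientGroup.mk g : π ⧸ N) := by
    rintro ⟨p, hp⟩
    have hpp := Nat.prime_of_mem_primeFactors hp
    have := Fact.mk hpp
    obtain ⟨H, _, hres⟩ := hvirt p hpp
    exact exists_normal_finiteIndex_pow_dvd_orderOf hres hg _
  choose N hN hNfin hdvd using hlocal
  have hK : (⨅ p, N p).Normal := Subgroup.normal_iInf_normal hN
  have hKfin : (⨅ p, N p).FiniteIndex := Subgroup.finiteIndex_iInf hNfin
  refine ⟨⨅ p, N p, hK, hKfin, ?_⟩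
  have hord : orderOf (QuotientGroup.mk g : π ⧸ ⨅ p, N p) ≠ 0 := (orderOf_pos _).ne'
  rw [← Nat.factorization_prime_le_iff_dvd hm hord]
  intro p hp
  by_cases hpm : p ∈ m.primeFactors
  · have hker :
        (QuotientGroup.mk' (⨅ p, N p)).ker ≤ (QuotientGroup.mk' (N ⟨p, hpm⟩)).ker := by
      rw [QuotientGroup.ker_mk', QuotientGroup.ker_mk']
      exact iInf_le _ _
    exact (hp.pow_dvd_iff_le_factorization hord).mp
      ((hdvd ⟨p, hpm⟩).trans (orderOf_dvd_orderOf_of_ker_le hker g))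
  · rw [← Nat.support_factorization, Finsupp.notMem_support_iff] at hpm
    exact hpm ▸ Nat.zero_le _

theorem exists_finite_quotient_with_order_divisible (π : Type*) [Group π]
    (hvirt : ∀ p : ℕ, p.Prime → ∃ H : Subgroup π, H.FiniteIndex ∧ ResiduallyP p H)
    (g : π) (hg : ¬IsOfFinOrder g) (m : ℕ) (hm : 0 < m) :
    ∃ (G : Type) (_ : Group G) (_ : Finite G) (α : π →* G),
      Function.Surjective α ∧ m ∣ orderOf (α g) := by
  obtain ⟨N, _, _, hdvd⟩ := exists_normal_finiteIndex_dvd_orderOf hvirt hg hm.ne'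
  obtain ⟨G, _, _, ⟨e⟩⟩ := Finite.exists_type_univ_nonempty_mulEquiv.{_, 0} (π ⧸ N)
  refine ⟨G, inferInstance, inferInstance, e.toMonoidHom.comp (QuotientGroup.mk' N),
    e.surjective.comp (QuotientGroup.mk'_surjective N), ?_⟩
  rwa [MonoidHom.comp_apply, MulEquiv.coe_toMonoidHom, MulEquiv.orderOf_eq]
end

section
/- Let φ : G → H be a group homomorphism such that for every normal subgroup H̃ of H with H/H̃ finite solvable, the induced map on abelianizations H₁(φ⁻¹(H̃); ℤ) → H₁(H̃; ℤ) is an isomorphism. Suppose moreover that φ is surjective and G is residually finite solvable. Then φ is an isomorphism. -/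
/-!
Let `f : G →* S` map to a finite solvable group. By induction on `n`, `ker φ ⊆ N := f⁻¹(S⁽ⁿ⁾)`:
then `φ(N)` has finite solvable quotient and preimage `N`, and elements of `ker φ` die in
`H₁(φ(N))`, so injectivity of `H₁(N) → H₁(φ(N))` puts them in `[N, N] ⊆ f⁻¹(S⁽ⁿ⁺¹⁾)`. As `S` is
solvable, `ker φ ⊆ ker f` for every such `f`, so residual finite solvability makes `φ` injective.
-/

/-- A group is residually finite solvable if every nontrivial element is detected by a
homomorphism to a finite solvable group. -/
def ResiduallyFiniteSolvable (G : Type*) [Group G] : Prop :=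
  ∀ g : G, g ≠ 1 → ∃ (S : Type) (_ : Group S) (_ : Finite S) (f : G →* S),
    IsSolvable S ∧ f g ≠ 1

open Function

namespace Subgroup

variable {G H S : Type*} [Group G] [Group H] [Group S]

structure HasFiniteSolvableQuotient (N : Subgroup G) : Prop where
  [normal : N.Normal]
  finite : Finite (G ⧸ N)
  isSolvable : Group.IsSolvable (G ⧸ N)

theorem hasFiniteSolvableQuotient_derivedSeries [Finite S] [Group.IsSolvable S] (n : ℕ) :
    (derivedSeries S n).HasFiniteSolvableQuotient where
  finite := inferInstance
  isSolvable := inferInstance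

theorem HasFiniteSolvableQuotient.comap {D : Subgroup S} (hD : D.HasFiniteSolvableQuotient)
    (f : G →* S) : (D.comap f).HasFiniteSolvableQuotient := by
  have := hD.normal; have := hD.finite; have := hD.isSolvable
  have hinj : Injective (QuotientGroup.map (D.comap f) D f le_rfl) := by
    refine (injective_iff_map_eq_one _).2 fun x hx => ?_
    induction x using QuotientGroup.induction_on with
    | H g => exact (QuotientGroup.eq_one_iff g).2 ((QuotientGroup.eq_one_iff (f g)).1 hx)
  exact { finite := Finite.of_injective _ hinj
          isSolvable := Group.isSolvable_of_isSolvable_injective hinj }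

theorem HasFiniteSolvableQuotient.map {N : Subgroup G} (hN : N.HasFiniteSolvableQuotient)
    {φ : G →* H} (hφ : Surjective φ) : (N.map φ).HasFiniteSolvableQuotient := by
  have := hN.normal; have := hN.finite; have := hN.isSolvable
  have := hN.normal.map φ hφ
  have hsurj : Surjective (QuotientGroup.map N (N.map φ) φ (le_comap_map φ N)) :=
    QuotientGroup.map_surjective_of_surjective _ _ φ (QuotientGroup.mk_surjective.comp hφ) _
  exact { finite := Finite.of_surjective _ hsurj
          isSolvable := Group.isSolvable_of_surjective hsurj }

end Subgroup

theorem MonoidHom.ker_le_commutator_comap_of_injective {G H : Type*} [Group G] [Group H]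
    (φ : G →* H) (K : Subgroup H)
    (hinj : Injective (Abelianization.map (φ.subgroupComap K))) :
    φ.ker ≤ ⁅K.comap φ, K.comap φ⁆ := by
  intro k hk
  let k' : K.comap φ := ⟨k, by simp [Subgroup.mem_comap, φ.mem_ker.1 hk]⟩
  have hk' : Abelianization.of k' = 1 := hinj <| by
    rw [Abelianization.map_of, map_one]
    exact congrArg Abelianization.of (Subtype.ext hk)
  rw [← Subgroup.map_subtype_commutator]
  exact ⟨k', by rwa [← Abelianization.ker_of], rfl⟩

theorem MonoidHom.ker_le_comap_derivedSeries {G H S : Type*} [Group G] [Group H] [Group S]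
    [Finite S] [Group.IsSolvable S] {φ : G →* H} (hφ : Surjective φ)
    (hinj : ∀ K : Subgroup H, K.HasFiniteSolvableQuotient →
      Injective (Abelianization.map (φ.subgroupComap K)))
    (f : G →* S) (n : ℕ) : φ.ker ≤ (derivedSeries S n).comap f := by
  induction n with
  | zero => simp
  | succ n ih =>
    have hker := φ.ker_le_commutator_comap_of_injective _
      (hinj _ (((Subgroup.hasFiniteSolvableQuotient_derivedSeries n).comap f).map hφ))
    rw [Subgroup.comap_map_eq, sup_eq_left.2 ih] at hker
    refine hker.trans ?_
    rw [derivedSeries_succ, ← Subgroup.map_le_iff_le_comap, Subgroup.map_commutator]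
    exact Subgroup.commutator_mono (Subgroup.map_comap_le _ _) (Subgroup.map_comap_le _ _)

theorem bijective_of_solvable_covers (G H : Type*) [Group G] [Group H] (φ : G →* H)
    (hab : ∀ H' : Subgroup H, ∀ _ : H'.Normal, Finite (H ⧸ H') → IsSolvable (H ⧸ H') →
      Function.Bijective (Abelianization.map (φ.subgroupComap H')))
    (hsurj : Function.Surjective φ) (hres : ResiduallyFiniteSolvable G) :
    Function.Bijective φ := by
  refine ⟨(injective_iff_map_eq_one φ).2 fun g hg => ?_, hsurj⟩
  by_contra hg1
  obtain ⟨S, _, _, f, hS, hfg⟩ := hres g hg1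
  have : Group.IsSolvable S := hS
  have hinj (K : Subgroup H) (hK : K.HasFiniteSolvableQuotient) :=
    (hab K hK.normal hK.finite hK.isSolvable).injective
  obtain ⟨n, hn⟩ := hS.solvable
  have hgn := φ.ker_le_comap_derivedSeries hsurj hinj f n hg
  rw [hn] at hgn
  exact hfg hgn
end
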